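/- Let Y ∈ ℝ^{n×d}, x* ∈ ℝ^n, β > 0, and let p*_m be the primal training optimal value with m neurons. Then there exists m* ≤ n such that for every m ≥ m* + 1, p*_m = sup over z ∈ ℝ^n satisfying |zᵀ(Yu)_+| ≤ β for all u ∈ ℝ^d with ‖u‖_2 ≤ 1, of −(1/2)‖z − x*‖_2² + (1/2)‖x*‖_2². -/

import Mathlib

/-!
Weak duality is a pointwise bound: for `z` in the dual feasible set `K`, homogeneity of
`u ↦ (Yu)₊` gives `v ⟪z, (Yu)₊⟫ ≤ β |v| ‖u‖ ≤ (β/2)(‖u‖² + v²)` for every neuron, and completing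
the square bounds `⟪z, x*⟫ - ½‖z‖²` by every primal objective value.

For the converse let `z` be the projection of `x*` onto the closed convex set `K` and
`r = x* - z`, so that `⟪r, ·⟫` attains its maximum `S ≥ 0` over `K` at `z`. As `K` is the
`β`-polar of the compact set of signed atoms `s (Yu)₊` (`|s| ≤ 1`, `‖u‖ ≤ 1`), the bipolar theorem
(Hahn–Banach separation) gives `β r ∈ S • conv(atoms)`, and Carathéodory writes `r` as a
combination of `n + 1` atoms with total weight `S / β`. Splitting each weight `c` as `√c · √c`
between the two layers yields a network with `n + 1` neurons, padded by zeros to `m`, whose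
objective is at most `½‖z‖² + S`, which is the dual objective at `z`.
-/

open Matrix Finset

noncomputable section

/-- Euclidean (ℓ2) norm of a vector in ℝ^k. -/
def l2 {k : ℕ} (x : Fin k → ℝ) : ℝ := Real.sqrt (∑ i, (x i) ^ 2)

/-- Componentwise ReLU. -/
def relu {k : ℕ} (x : Fin k → ℝ) : Fin k → ℝ := fun i => max (x i) 0

/-- The set of ReLU sign-pattern matrices of `Y`: diagonal 0/1 matrices
`Diag(1_{Yu ≥ 0})` as `u` ranges over the closed unit ball. -/
def signPatterns {n d : ℕ} (Y : Matrix (Fin n) (Fin d) ℝ) :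
    Set (Matrix (Fin n) (Fin n) ℝ) :=
  { M | ∃ u : Fin d → ℝ, l2 u ≤ 1 ∧
      M = Matrix.diagonal (fun i => if 0 ≤ Y.mulVec u i then (1 : ℝ) else 0) }

/-- Primal (non-convex) training objective with `m` neurons. -/
def primalObj {n d : ℕ} (Y : Matrix (Fin n) (Fin d) ℝ) (xs : Fin n → ℝ) (β : ℝ)
    (m : ℕ) (u : Fin m → Fin d → ℝ) (v : Fin m → ℝ) : ℝ :=
  (1 / 2) * l2 ((∑ j, v j • relu (Y.mulVec (u j))) - xs) ^ 2
    + (β / 2) * ∑ j, (l2 (u j) ^ 2 + |v j| ^ 2)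

/-- Optimal value of the primal training problem with `m` neurons. -/
def pStar {n d : ℕ} (Y : Matrix (Fin n) (Fin d) ℝ) (xs : Fin n → ℝ) (β : ℝ)
    (m : ℕ) : ℝ :=
  sInf { c | ∃ u : Fin m → Fin d → ℝ, ∃ v : Fin m → ℝ, c = primalObj Y xs β m u v }

/-- Dual feasibility: `(2 Dᵢ − I) Y wᵢ ≥ 0` componentwise for every `i`. -/
def dualFeasible {n d ℓ : ℕ} (Y : Matrix (Fin n) (Fin d) ℝ)
    (D : Fin ℓ → Matrix (Fin n) (Fin n) ℝ) (w : Fin ℓ → Fin d → ℝ) : Prop :=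
  ∀ i j, 0 ≤ ((2 • D i - 1).mulVec (Y.mulVec (w i))) j

/-- Convex dual objective. -/
def dualObj {n d ℓ : ℕ} (Y : Matrix (Fin n) (Fin d) ℝ) (xs : Fin n → ℝ) (β : ℝ)
    (D : Fin ℓ → Matrix (Fin n) (Fin n) ℝ) (w z : Fin ℓ → Fin d → ℝ) : ℝ :=
  (1 / 2) * l2 ((∑ i, (D i).mulVec (Y.mulVec (w i - z i))) - xs) ^ 2
    + β * ∑ i, (l2 (w i) + l2 (z i))

/-- Optimal value of the convex dual program. -/
def dStar {n d ℓ : ℕ} (Y : Matrix (Fin n) (Fin d) ℝ) (xs : Fin n → ℝ) (β : ℝ)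
    (D : Fin ℓ → Matrix (Fin n) (Fin n) ℝ) : ℝ :=
  sInf { c | ∃ w z : Fin ℓ → Fin d → ℝ,
    dualFeasible Y D w ∧ dualFeasible Y D z ∧ c = dualObj Y xs β D w z }

end

open RealInnerProductSpace Pointwise

theorem csSup_eq_csInf_of_forall_le_of_le {α : Type*} [ConditionallyCompleteLattice α]
    {s t : Set α} (h : ∀ a ∈ s, ∀ b ∈ t, a ≤ b) {a b : α} (ha : a ∈ s) (hb : b ∈ t)
    (hba : b ≤ a) : sSup s = sInf t := by
  rw [IsGreatest.csSup_eq ⟨ha, fun a' ha' => (h a' ha' b hb).trans hba⟩,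
    IsLeast.csInf_eq ⟨hb, fun b' hb' => hba.trans (h a ha b' hb')⟩]
  exact le_antisymm (h a ha b hb) hba

section Caratheodory

variable {𝕜 E : Type*} [Field 𝕜] [LinearOrder 𝕜] [IsStrictOrderedRing 𝕜] [AddCommGroup E]
  [Module 𝕜 E] [FiniteDimensional 𝕜 E]

theorem convexHull_eq_image_stdSimplex (A : Set E) {m : ℕ} (hm : Module.finrank 𝕜 E + 1 ≤ m) :
    convexHull 𝕜 A = (fun p : (Fin m → 𝕜) × (Fin m → E) => ∑ j, p.1 j • p.2 j) ''
      (stdSimplex 𝕜 (Fin m) ×ˢ Set.univ.pi fun _ => A) := by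
  classical
  refine subset_antisymm (fun x hx => ?_) ?_
  · obtain ⟨ι, _, a, w, ha, haff, hw, hw1, rfl⟩ := eq_pos_convex_span_of_mem_convexHull hx
    have hcard : Fintype.card ι ≤ m := haff.card_le_finrank_succ.trans
      (le_trans (Nat.add_le_add_right (Submodule.finrank_le _) 1) hm)
    obtain ⟨e⟩ := Function.Embedding.nonempty_of_card_le (hcard.trans (Fintype.card_fin m).ge)
    obtain ⟨a₀, ha₀⟩ : A.Nonempty := (convexHull_nonempty_iff (𝕜 := 𝕜)).1 ⟨_, hx⟩
    have hext : ∀ j ∉ Set.range e, Function.extend e w 0 j = 0 := fun j hj =>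
      Function.extend_apply' _ _ _ (by simpa using hj)
    refine ⟨(Function.extend e w 0, Function.extend e a fun _ => a₀), ⟨⟨fun j => ?_, ?_⟩,
      fun j _ => ?_⟩, ?_⟩
    · by_cases hj : j ∈ Set.range e
      · obtain ⟨i, rfl⟩ := hj
        simpa [e.injective.extend_apply] using (hw i).le
      · simp [hext j hj]
    · exact (Fintype.sum_of_injective e e.injective _ _ hext
        fun i => (e.injective.extend_apply _ _ _).symm).symm.trans hw1
    · by_cases hj : j ∈ Set.range e
      · obtain ⟨i, rfl⟩ := hj
        simpa [e.injective.extend_apply] using ha ⟨i, rfl⟩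
      · simpa [Function.extend_apply' _ _ _ (by simpa using hj)] using ha₀
    · refine (Fintype.sum_of_injective e e.injective _ _ (fun j hj => ?_) fun i => ?_).symm
      · simp [hext j hj]
      · simp [e.injective.extend_apply]
  · rintro _ ⟨⟨w, a⟩, ⟨hw, ha⟩, rfl⟩
    exact (convex_convexHull 𝕜 A).sum_mem (fun j _ => hw.1 j) hw.2
      fun j _ => subset_convexHull 𝕜 A (ha j (Set.mem_univ j))

end Caratheodory

section InnerProductSpace

variable {E : Type*} [NormedAddCommGroup E] [InnerProductSpace ℝ E]

theorem IsCompact.convexHull_of_finiteDimensional [FiniteDimensional ℝ E] {A : Set E}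
    (hA : IsCompact A) : IsCompact (convexHull ℝ A) := by
  rw [convexHull_eq_image_stdSimplex A le_rfl]
  exact ((isCompact_stdSimplex _ _).prod (isCompact_univ_pi fun _ => hA)).image (by fun_prop)

def innerPolar (A : Set E) (β : ℝ) : Set E := {z | ∀ a ∈ A, ⟪z, a⟫ ≤ β}

theorem innerPolar_eq_biInter (A : Set E) (β : ℝ) :
    innerPolar A β = ⋂ a ∈ A, {z | ⟪z, a⟫ ≤ β} := by
  ext; simp [innerPolar]

theorem convex_innerPolar (A : Set E) (β : ℝ) : Convex ℝ (innerPolar A β) := by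
  rw [innerPolar_eq_biInter]
  exact convex_iInter₂ fun a _ => convex_halfSpace_le ((innerₛₗ ℝ).flip a).isLinear β

theorem isClosed_innerPolar (A : Set E) (β : ℝ) : IsClosed (innerPolar A β) := by
  rw [innerPolar_eq_biInter]
  exact isClosed_biInter fun a _ => isClosed_le (by fun_prop) continuous_const

theorem smul_mem_smul_convexHull_of_inner_le [FiniteDimensional ℝ E] {A : Set E}
    (hA : IsCompact A) (h0 : (0 : E) ∈ A) {β S : ℝ} (hβ : 0 ≤ β) {r : E}
    (hr : ∀ z ∈ innerPolar A β, ⟪r, z⟫ ≤ S) : β • r ∈ S • convexHull ℝ A := by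
  -- Separate `β • r` from `S • conv A` by some `⟪w, ·⟫`; a rescaling of `w` then lies in the
  -- polar and violates `hr`.
  by_contra hmem
  obtain ⟨f, s, hfC, hfr⟩ := geometric_hahn_banach_closed_point
    ((convex_convexHull ℝ A).smul S) (hA.convexHull_of_finiteDimensional.smul S).isClosed hmem
  obtain ⟨a₀, ha₀, hmax⟩ := hA.exists_isMaxOn ⟨0, h0⟩ f.continuous.continuousOn
  set w := (InnerProductSpace.toDual ℝ E).symm f
  have hw (x : E) : ⟪w, x⟫ = f x := InnerProductSpace.toDual_symm_apply
  have hfβr : f (β • r) = β * f r := by simp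
  have hsep : S * f a₀ < β * f r := by
    simpa [hfβr] using (hfC _ (Set.smul_mem_smul_set (subset_convexHull ℝ A ha₀))).trans hfr
  have hM : 0 ≤ f a₀ := by simpa using hmax h0
  rcases hM.eq_or_lt with hM | hM
  · have hfr_pos : 0 < f r := by
      have := (hfC 0 ⟨0, subset_convexHull ℝ A h0, smul_zero S⟩).trans hfr
      rw [map_zero, hfβr] at this
      exact pos_of_mul_pos_right this hβ
    have hfeas : ∀ t : ℝ, 0 ≤ t → t • w ∈ innerPolar A β := fun t ht a ha => by
      rw [real_inner_smul_left, hw]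
      nlinarith [show f a ≤ f a₀ from hmax ha]
    have := hr _ (hfeas ((|S| + 1) / f r) (by positivity))
    rw [real_inner_smul_right, real_inner_comm, hw, div_mul_cancel₀ _ hfr_pos.ne'] at this
    linarith [le_abs_self S]
  · have hfeas : (β / f a₀) • w ∈ innerPolar A β := fun a ha => by
      rw [real_inner_smul_left, hw, div_mul_eq_mul_div, div_le_iff₀ hM]
      exact mul_le_mul_of_nonneg_left (hmax ha) hβ
    have := hr _ hfeas
    rw [real_inner_smul_right, real_inner_comm, hw, div_mul_eq_mul_div, div_le_iff₀ hM] at this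
    linarith

end InnerProductSpace

section ReLU

theorem l2_eq_norm {k : ℕ} (x : Fin k → ℝ) : l2 x = ‖WithLp.toLp 2 x‖ := by
  simp [l2, EuclideanSpace.norm_eq]

theorem l2_nonneg {k : ℕ} (x : Fin k → ℝ) : 0 ≤ l2 x := Real.sqrt_nonneg _

theorem l2_eq_zero {k : ℕ} {x : Fin k → ℝ} : l2 x = 0 ↔ x = 0 := by
  rw [l2_eq_norm, norm_eq_zero, WithLp.toLp_eq_zero]

theorem l2_smul {k : ℕ} (c : ℝ) (x : Fin k → ℝ) : l2 (c • x) = |c| * l2 x := by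
  simp [l2_eq_norm, norm_smul]

theorem isCompact_setOf_l2_le (k : ℕ) (R : ℝ) : IsCompact {x : Fin k → ℝ | l2 x ≤ R} := by
  have : {x : Fin k → ℝ | l2 x ≤ R} =
      (EuclideanSpace.equiv (Fin k) ℝ).symm ⁻¹' Metric.closedBall 0 R := by
    ext; simp [l2_eq_norm]
  rw [this]
  exact (EuclideanSpace.equiv (Fin k) ℝ).symm.toHomeomorph.isCompact_preimage.2
    (isCompact_closedBall 0 R)

theorem sum_mul_eq_inner {k : ℕ} (x y : Fin k → ℝ) :
    ∑ i, x i * y i = ⟪WithLp.toLp 2 x, (WithLp.toLp 2 y : EuclideanSpace ℝ (Fin k))⟫ := by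
  simp [PiLp.inner_apply, mul_comm]

theorem neg_half_l2_sub_sq_add_half_l2_sq {k : ℕ} (z xs : Fin k → ℝ) :
    -(1 / 2) * l2 (z - xs) ^ 2 + (1 / 2) * l2 xs ^ 2
      = ⟪WithLp.toLp 2 z, (WithLp.toLp 2 xs : EuclideanSpace ℝ (Fin k))⟫
        - 1 / 2 * ‖(WithLp.toLp 2 z : EuclideanSpace ℝ (Fin k))‖ ^ 2 := by
  rw [l2_eq_norm, l2_eq_norm, WithLp.toLp_sub, norm_sub_sq_real]
  ring

theorem relu_smul {k : ℕ} {c : ℝ} (hc : 0 ≤ c) (x : Fin k → ℝ) : relu (c • x) = c • relu x := by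
  funext i
  simp [relu, mul_max_of_nonneg _ _ hc]

variable {n d : ℕ} (Y : Matrix (Fin n) (Fin d) ℝ)

def atom (u : Fin d → ℝ) : EuclideanSpace ℝ (Fin n) := WithLp.toLp 2 (relu (Y *ᵥ u))

theorem atom_smul {c : ℝ} (hc : 0 ≤ c) (u : Fin d → ℝ) : atom Y (c • u) = c • atom Y u := by
  simp [atom, mulVec_smul, relu_smul hc]

theorem atom_zero : atom Y 0 = 0 := by
  simpa using atom_smul Y le_rfl 0

theorem continuous_atom : Continuous (atom Y) := by
  unfold atom relu
  fun_prop

def signedAtoms : Set (EuclideanSpace ℝ (Fin n)) :=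
  (fun p : ℝ × (Fin d → ℝ) => p.1 • atom Y p.2) '' (Set.Icc (-1) 1 ×ˢ {u | l2 u ≤ 1})

theorem isCompact_signedAtoms : IsCompact (signedAtoms Y) :=
  (isCompact_Icc.prod (isCompact_setOf_l2_le d 1)).image
    (continuous_fst.smul ((continuous_atom Y).comp continuous_snd))

theorem zero_mem_signedAtoms : (0 : EuclideanSpace ℝ (Fin n)) ∈ signedAtoms Y :=
  ⟨(0, 0), ⟨by norm_num, by simp [l2]⟩, zero_smul ℝ _⟩

theorem mem_innerPolar_signedAtoms {β : ℝ} {z : EuclideanSpace ℝ (Fin n)} :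
    z ∈ innerPolar (signedAtoms Y) β ↔ ∀ u, l2 u ≤ 1 → |⟪z, atom Y u⟫| ≤ β := by
  simp only [innerPolar, signedAtoms, Set.forall_mem_image, Prod.forall, Set.mem_prod,
    Set.mem_Icc, Set.mem_ofPred_eq, real_inner_smul_right, and_imp]
  constructor
  · intro h u hu
    have h₁ := h (-1) u le_rfl (by norm_num) hu
    have h₂ := h 1 u (by norm_num) le_rfl hu
    exact abs_le.2 ⟨by linarith, by linarith⟩
  · intro h s u hs₁ hs₂ hu
    calc s * ⟪z, atom Y u⟫ ≤ |s| * |⟪z, atom Y u⟫| := by rw [← abs_mul]; exact le_abs_self _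
      _ ≤ 1 * β := mul_le_mul (abs_le.2 ⟨hs₁, hs₂⟩) (h u hu) (abs_nonneg _) zero_le_one
      _ = β := one_mul β

theorem abs_inner_atom_le {β : ℝ} {z : EuclideanSpace ℝ (Fin n)}
    (hz : z ∈ innerPolar (signedAtoms Y) β) (u : Fin d → ℝ) :
    |⟪z, atom Y u⟫| ≤ β * l2 u := by
  rw [mem_innerPolar_signedAtoms] at hz
  rcases (l2_nonneg u).eq_or_lt with h | h
  · obtain rfl := l2_eq_zero.1 h.symm
    rw [atom_zero, inner_zero_right, abs_zero, ← h, mul_zero]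
  · have hunit : l2 ((l2 u)⁻¹ • u) ≤ 1 := by
      rw [l2_smul, abs_of_pos (inv_pos.2 h), inv_mul_cancel₀ h.ne']
    have := hz _ hunit
    rwa [atom_smul Y (inv_nonneg.2 h.le), real_inner_smul_right, abs_mul,
      abs_of_pos (inv_pos.2 h), inv_mul_le_iff₀ h, mul_comm] at this

theorem primalObj_eq (xs : Fin n → ℝ) (β : ℝ) (m : ℕ) (u : Fin m → Fin d → ℝ) (v : Fin m → ℝ) :
    primalObj Y xs β m u v = 1 / 2 * ‖∑ j, v j • atom Y (u j) - WithLp.toLp 2 xs‖ ^ 2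
      + β / 2 * ∑ j, (l2 (u j) ^ 2 + |v j| ^ 2) := by
  simp [primalObj, l2_eq_norm, atom]

theorem inner_sub_half_norm_sq_le_primalObj {β : ℝ} (hβ : 0 ≤ β) {z : EuclideanSpace ℝ (Fin n)}
    (hz : z ∈ innerPolar (signedAtoms Y) β) (xs : Fin n → ℝ) (m : ℕ) (u : Fin m → Fin d → ℝ)
    (v : Fin m → ℝ) : ⟪z, WithLp.toLp 2 xs⟫ - 1 / 2 * ‖z‖ ^ 2 ≤ primalObj Y xs β m u v := by
  set x : EuclideanSpace ℝ (Fin n) := WithLp.toLp 2 xs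
  set F := ∑ j, v j • atom Y (u j)
  have hF : ⟪z, F⟫ ≤ β / 2 * ∑ j, (l2 (u j) ^ 2 + |v j| ^ 2) := by
    rw [inner_sum, mul_sum]
    refine sum_le_sum fun j _ => ?_
    rw [real_inner_smul_right]
    calc v j * ⟪z, atom Y (u j)⟫ ≤ |v j| * |⟪z, atom Y (u j)⟫| := by
          rw [← abs_mul]; exact le_abs_self _
      _ ≤ |v j| * (β * l2 (u j)) := by gcongr; exact abs_inner_atom_le Y hz (u j)
      _ ≤ β / 2 * (l2 (u j) ^ 2 + |v j| ^ 2) := by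
          nlinarith [mul_nonneg hβ (sq_nonneg (l2 (u j) - |v j|))]
  have hres : -⟪z, F - x⟫ ≤ 1 / 2 * ‖z‖ ^ 2 + 1 / 2 * ‖F - x‖ ^ 2 := by
    linarith [norm_add_sq_real z (F - x), sq_nonneg ‖z + (F - x)‖]
  have hsplit : ⟪z, x⟫ = ⟪z, F⟫ - ⟪z, F - x⟫ := by rw [inner_sub_right]; ring
  rw [primalObj_eq]
  linarith

theorem exists_neuron_eq_smul {a : EuclideanSpace ℝ (Fin n)} (ha : a ∈ signedAtoms Y) {c : ℝ}
    (hc : 0 ≤ c) :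
    ∃ (u : Fin d → ℝ) (v : ℝ), v • atom Y u = c • a ∧ l2 u ^ 2 + |v| ^ 2 ≤ 2 * c := by
  obtain ⟨⟨s, u⟩, ⟨⟨hs₁, hs₂⟩, hu⟩, rfl⟩ := ha
  refine ⟨√c • u, s * √c, ?_, ?_⟩
  · rw [atom_smul Y (Real.sqrt_nonneg c), smul_smul, smul_smul, mul_assoc,
      Real.mul_self_sqrt hc, mul_comm]
  · have hs : |s| ^ 2 ≤ 1 := pow_le_one₀ (abs_nonneg s) (abs_le.2 ⟨hs₁, hs₂⟩)
    have hu' : l2 u ^ 2 ≤ 1 := pow_le_one₀ (l2_nonneg u) hu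
    rw [l2_smul, abs_mul, mul_pow, mul_pow, abs_of_nonneg (Real.sqrt_nonneg c), Real.sq_sqrt hc]
    nlinarith

theorem exists_primalObj_le_of_mem_smul_convexHull {β S : ℝ} (hβ : 0 < β) (hS : 0 ≤ S)
    (xs : Fin n → ℝ) {m : ℕ} (hm : n + 1 ≤ m) {r : EuclideanSpace ℝ (Fin n)}
    (hr : β • r ∈ S • convexHull ℝ (signedAtoms Y)) :
    ∃ u v, primalObj Y xs β m u v ≤ 1 / 2 * ‖r - WithLp.toLp 2 xs‖ ^ 2 + S := by
  obtain ⟨y, hy, hyr⟩ := hr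
  rw [convexHull_eq_image_stdSimplex _ (by simpa using hm)] at hy
  obtain ⟨⟨w, a⟩, ⟨hw, ha⟩, rfl⟩ := hy
  dsimp only at hyr hw ha
  choose u v huv hcost using fun j =>
    exists_neuron_eq_smul Y (ha j trivial) (mul_nonneg (div_nonneg hS hβ.le) (hw.1 j))
  have hsum : ∑ j, v j • atom Y (u j) = r := by
    simp_rw [huv, mul_smul, ← smul_sum, div_eq_inv_mul, mul_smul]
    rw [hyr, smul_smul, inv_mul_cancel₀ hβ.ne', one_smul]
  have hcost : β / 2 * ∑ j, (l2 (u j) ^ 2 + |v j| ^ 2) ≤ S :=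
    calc β / 2 * ∑ j, (l2 (u j) ^ 2 + |v j| ^ 2) ≤ β / 2 * ∑ j, 2 * (S / β * w j) := by
          gcongr with j; exact hcost j
      _ = S := by
          rw [← mul_sum, ← mul_sum, hw.2]
          field_simp
  refine ⟨u, v, ?_⟩
  rw [primalObj_eq, hsum]
  linarith

theorem exists_primalObj_le_inner_sub_half_norm_sq {β : ℝ} (hβ : 0 < β) (xs : Fin n → ℝ)
    {m : ℕ} (hm : n + 1 ≤ m) :
    ∃ z ∈ innerPolar (signedAtoms Y) β, ∃ u v,
      primalObj Y xs β m u v ≤ ⟪z, WithLp.toLp 2 xs⟫ - 1 / 2 * ‖z‖ ^ 2 := by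
  set x : EuclideanSpace ℝ (Fin n) := WithLp.toLp 2 xs
  set K := innerPolar (signedAtoms Y) β
  have h0K : (0 : EuclideanSpace ℝ (Fin n)) ∈ K := fun a _ => by simpa using hβ.le
  obtain ⟨z, hzK, hz⟩ := exists_norm_eq_iInf_of_complete_convex ⟨0, h0K⟩
    (isClosed_innerPolar _ _).isComplete (convex_innerPolar _ _) x
  have hproj : ∀ y ∈ K, ⟪x - z, y⟫ ≤ ⟪x - z, z⟫ := fun y hy => by
    have := (norm_eq_iInf_iff_real_inner_le_zero (convex_innerPolar _ _) hzK).1 hz y hy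
    rw [inner_sub_right] at this
    linarith
  have hS : 0 ≤ ⟪x - z, z⟫ := by simpa using hproj 0 h0K
  obtain ⟨u, v, huv⟩ := exists_primalObj_le_of_mem_smul_convexHull Y hβ hS xs hm
    (smul_mem_smul_convexHull_of_inner_le (isCompact_signedAtoms Y) (zero_mem_signedAtoms Y)
      hβ.le hproj)
  refine ⟨z, hzK, u, v, huv.trans_eq ?_⟩
  rw [sub_sub_cancel_left, norm_neg, inner_sub_left, real_inner_self_eq_norm_sq, real_inner_comm]
  ring

end ReLU

/-- **Semi-infinite strong dual.** There exists `m* ≤ n` such that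
for every `m ≥ m* + 1`, the primal optimal value equals the value of the
semi-infinite dual `sup { −(1/2)‖z − x*‖² + (1/2)‖x*‖² : |zᵀ(Yu)₊| ≤ β ∀ ‖u‖₂ ≤ 1 }`. -/
theorem semi_infinite_dual {n d : ℕ} (Y : Matrix (Fin n) (Fin d) ℝ)
    (xs : Fin n → ℝ) (β : ℝ) (hβ : 0 < β) :
    ∃ mstar ≤ n, ∀ m ≥ mstar + 1,
      pStar Y xs β m =
        sSup { c | ∃ z : Fin n → ℝ,
          (∀ u : Fin d → ℝ, l2 u ≤ 1 → |∑ i, z i * relu (Y.mulVec u) i| ≤ β) ∧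
          c = -(1 / 2) * l2 (z - xs) ^ 2 + (1 / 2) * l2 xs ^ 2 } := by
  refine ⟨n, le_rfl, fun m hm => ?_⟩
  rw [pStar, eq_comm]
  have hfeas (z : Fin n → ℝ) :
      (∀ u : Fin d → ℝ, l2 u ≤ 1 → |∑ i, z i * relu (Y.mulVec u) i| ≤ β) ↔
        WithLp.toLp 2 z ∈ innerPolar (signedAtoms Y) β := by
    simp only [mem_innerPolar_signedAtoms, sum_mul_eq_inner, atom]
  obtain ⟨z, hz, u, v, hle⟩ := exists_primalObj_le_inner_sub_half_norm_sq Y hβ xs hm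
  refine csSup_eq_csInf_of_forall_le_of_le ?_ ⟨WithLp.ofLp z, (hfeas _).2 hz, rfl⟩
    ⟨u, v, rfl⟩ ?_
  · rintro _ ⟨z, hz, rfl⟩ _ ⟨u, v, rfl⟩
    rw [neg_half_l2_sub_sq_add_half_l2_sq]
    exact inner_sub_half_norm_sq_le_primalObj Y hβ.le ((hfeas z).1 hz) xs m u v
  · rwa [neg_half_l2_sub_sq_add_half_l2_sq]
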